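/- arXiv:1404.5174 — 4 statements merged into one kernel-verified Lean document; each statement's English description precedes it below -/
import Mathlib

section
/- Let (g,B) be a quadratic Lie algebra, let s be a Levi subalgebra of g, let r be the solvable radical of g, and suppose g is B-irreducible, non solvable and not simple. Then the orthogonal complement r^perp of r (with respect to B) is contained in the center of r. -/
/-!
Invariance makes the orthogonal of an ideal `N` an ideal commuting with `N`, so `N ∩ N^⊥` is
abelian and lies in the radical `r`. The Levi projection `g → s` has kernel `r`, and the ideals
of the semisimple `s` form a Boolean algebra, so the image of `r^⊥` has a complement whose
preimage `T` satisfies `r ⊆ T`, `r^⊥ + T = g` and `r^⊥ ∩ T ⊆ r`. An element of `T` orthogonal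
to `T` lies in `r`, hence is orthogonal to `r^⊥ + T = g`; so `B` is nondegenerate on `T`, and
irreducibility gives either `T = g`, i.e. `r^⊥ ⊆ r`, or `T = 0`. In the latter case `r = 0`,
every ideal is nondegenerate, and `g` would be simple.
-/

namespace LinearMap.BilinForm

variable {R L : Type*} [CommRing R] [LieRing L] [LieAlgebra R L] {Φ : LinearMap.BilinForm R L}

lemma lieInvariant_of_apply_lie_eq_apply_lie (h : ∀ x y z : L, Φ ⁅x, y⁆ z = Φ x ⁅y, z⁆) :
    Φ.lieInvariant L := fun x y z => by
  rw [← lie_skew, map_neg, LinearMap.neg_apply, h]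

lemma lieInvariant.flip (hΦ : Φ.lieInvariant L) : Φ.flip.lieInvariant L := fun x y z => by
  simp only [flip_apply, hΦ x z y, neg_neg]

end LinearMap.BilinForm

namespace LieAlgebra.InvariantForm

variable {R L : Type*} [CommRing R] [LieRing L] [LieAlgebra R L] {Φ : LinearMap.BilinForm R L}

lemma lie_eq_zero_of_mem_orthogonal (hΦ_nondeg : Φ.Nondegenerate) (hΦ_inv : Φ.lieInvariant L)
    (N : LieIdeal R L) {x y : L} (hx : x ∈ N) (hy : y ∈ orthogonal Φ hΦ_inv N) : ⁅x, y⁆ = 0 := by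
  refine hΦ_nondeg.2 _ fun z => ?_
  rw [← neg_eq_zero, ← hΦ_inv]
  exact (mem_orthogonal Φ hΦ_inv N y).1 hy _ (lie_mem_left R L N x z hx)

lemma inf_orthogonal_le_radical [IsNoetherian R L] (hΦ_nondeg : Φ.Nondegenerate)
    (hΦ_inv : Φ.lieInvariant L) (N : LieIdeal R L) :
    N ⊓ orthogonal Φ hΦ_inv N ≤ radical R L := by
  have : IsLieAbelian ↥(N ⊓ orthogonal Φ hΦ_inv N) :=
    ⟨fun x y => Subtype.ext <| lie_eq_zero_of_mem_orthogonal hΦ_nondeg hΦ_inv N x.2.1 y.2.2⟩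
  exact (LieIdeal.solvable_iff_le_radical R L _).1 inferInstance

lemma mem_radical_of_forall_apply_eq_zero [IsNoetherian R L] (hΦ_nondeg : Φ.Nondegenerate)
    (hΦ_inv : Φ.lieInvariant L) (N : LieIdeal R L) {y : L} (hy : y ∈ N)
    (hyN : ∀ z ∈ N, Φ y z = 0) : y ∈ radical R L :=
  inf_orthogonal_le_radical hΦ_nondeg.flip hΦ_inv.flip N ⟨hy, (mem_orthogonal _ _ N y).2 hyN⟩

end LieAlgebra.InvariantForm

namespace LieSubalgebra

variable {R L : Type*} [CommRing R] [LieRing L] [LieAlgebra R L]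

noncomputable def projOfIsCompl (s : LieSubalgebra R L) (I : LieIdeal R L)
    (h : IsCompl s.toSubmodule I.toSubmodule) : L →ₗ⁅R⁆ s where
  __ := s.toSubmodule.projectionOnto I.toSubmodule h
  map_lie' {x y} := by
    set π := s.toSubmodule.projectionOnto I.toSubmodule h
    have hsub : ∀ z, z - (π z : L) ∈ I := fun z => by
      rw [← LieSubmodule.mem_toSubmodule, ← Submodule.projectionOnto_apply_eq_zero_iff h,
        map_sub, Submodule.projectionOnto_apply_left, sub_self]
    have hdiff : ⁅x, y⁆ - ⁅(π x : L), (π y : L)⁆ ∈ I := by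
      have : ⁅x, y⁆ - ⁅(π x : L), (π y : L)⁆ =
          ⁅x - π x, y⁆ + ⁅(π x : L), y - π y⁆ := by
        simp only [sub_lie, lie_sub]; abel
      rw [this]
      exact add_mem (lie_mem_left R L I _ _ (hsub x)) (lie_mem_right R L I _ _ (hsub y))
    refine Subtype.ext (?_ : (π ⁅x, y⁆ : L) = ⁅(π x : L), (π y : L)⁆)
    rw [← sub_add_cancel ⁅x, y⁆ ⁅(π x : L), (π y : L)⁆, map_add,
      Submodule.projectionOnto_apply_of_mem_right h hdiff, zero_add,
      Submodule.projectionOnto_apply_of_mem_left h (s.lie_mem (π x).2 (π y).2)]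


@[simp]
lemma ker_projOfIsCompl (s : LieSubalgebra R L) (I : LieIdeal R L)
    (h : IsCompl s.toSubmodule I.toSubmodule) : (s.projOfIsCompl I h).ker = I :=
  LieSubmodule.ext _ _ fun _ => Submodule.projectionOnto_apply_eq_zero_iff h

lemma projOfIsCompl_surjective (s : LieSubalgebra R L) (I : LieIdeal R L)
    (h : IsCompl s.toSubmodule I.toSubmodule) : Function.Surjective (s.projOfIsCompl I h) :=
  Submodule.projectionOnto_surjective h

end LieSubalgebra

lemma LieIdeal.exists_sup_eq_top_inf_le_ker {R L L' : Type*} [CommRing R] [LieRing L]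
    [LieAlgebra R L] [LieRing L'] [LieAlgebra R L'] [ComplementedLattice (LieIdeal R L')]
    {f : L →ₗ⁅R⁆ L'} (hf : Function.Surjective f) (I : LieIdeal R L) :
    ∃ T : LieIdeal R L, f.ker ≤ T ∧ I ⊔ T = ⊤ ∧ I ⊓ T ≤ f.ker := by
  obtain ⟨C, hC⟩ := exists_isCompl (I.map f)
  refine ⟨C.comap f, f.ker_le_comap C, eq_top_iff.2 fun x _ => ?_, fun x hx => ?_⟩
  · obtain ⟨p, hp, c, hc, hpc⟩ :=
      (LieSubmodule.mem_sup _ _ _).1 (hC.sup_eq_top ▸ LieSubmodule.mem_top (f x))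
    obtain ⟨⟨i, hi⟩, rfl⟩ := LieIdeal.mem_map_of_surjective hf hp
    refine (LieSubmodule.mem_sup _ _ _).2 ⟨i, hi, x - i, ?_, add_sub_cancel _ _⟩
    rwa [LieIdeal.mem_comap, map_sub, ← hpc, add_sub_cancel_left]
  · have : f x ∈ I.map f ⊓ C := ⟨LieIdeal.mem_map hx.1, hx.2⟩
    rwa [hC.inf_eq_bot, LieSubmodule.mem_bot, ← LieHom.mem_ker] at this

open LieAlgebra InvariantForm

theorem radical_orthogonal_subset_center_radical_general
    (K : Type*) [Field K]
    (L : Type*) [LieRing L] [LieAlgebra K L] [Module.Finite K L]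
    (B : LinearMap.BilinForm K L)
    (hB : B.Nondegenerate)
    (hinv : ∀ x y z : L, B ⁅x, y⁆ z = B x ⁅y, z⁆)
    (s : LieSubalgebra K L)
    (hs : LieAlgebra.IsSemisimple K s)
    (hLevi : IsCompl s.toSubmodule
      (LieSubmodule.toSubmodule (LieAlgebra.radical K L)))
    (hnonsolv : ¬ LieAlgebra.IsSolvable L)
    (hnonsimple : ¬ LieAlgebra.IsSimple K L)
    (hirr : ∀ J : LieIdeal K L,
      (∀ x ∈ J, (∀ y ∈ J, B x y = 0) → x = 0) → J = ⊥ ∨ J = ⊤) :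
    ∀ x ∈ B.orthogonal (LieSubmodule.toSubmodule (LieAlgebra.radical K L)),
      x ∈ LieAlgebra.radical K L ∧ ∀ y ∈ LieAlgebra.radical K L, ⁅x, y⁆ = 0 := by
  have hB_inv : B.lieInvariant L :=
    LinearMap.BilinForm.lieInvariant_of_apply_lie_eq_apply_lie hinv
  set r := radical K L
  set I := orthogonal B hB_inv r
  obtain ⟨T, hrT, hsup, hinf⟩ :=
    LieIdeal.exists_sup_eq_top_inf_le_ker (s.projOfIsCompl_surjective r hLevi) I
  rw [LieSubalgebra.ker_projOfIsCompl] at hrT hinf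
  have hT_nondeg : ∀ y ∈ T, (∀ z ∈ T, B y z = 0) → y = 0 := by
    intro y hyT hy
    have hyr : y ∈ r := mem_radical_of_forall_apply_eq_zero hB hB_inv T hyT hy
    refine hB.1 y fun z => ?_
    obtain ⟨i, hi, t, ht, rfl⟩ :=
      (LieSubmodule.mem_sup _ _ _).1 (hsup ▸ LieSubmodule.mem_top z)
    rw [map_add, (mem_orthogonal B hB_inv r i).1 hi y hyr, hy t ht, add_zero]
  intro x hx
  refine ⟨?_, fun y hy => ?_⟩
  · rcases hirr T hT_nondeg with hT | hT
    · exfalso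
      refine hnonsimple ⟨fun J => hirr J fun y hyJ hy => ?_, fun _ => hnonsolv inferInstance⟩
      have hyr : y ∈ r := mem_radical_of_forall_apply_eq_zero hB hB_inv J hyJ hy
      rwa [eq_bot_iff.2 (hrT.trans hT.le), LieSubmodule.mem_bot] at hyr
    · exact hinf ⟨hx, hT ▸ LieSubmodule.mem_top x⟩
  · rw [← lie_skew, lie_eq_zero_of_mem_orthogonal hB hB_inv r hy hx, neg_zero]

/-- Let `(g,B)` be a non-solvable, non-simple, `B`-irreducible quadratic Lie algebra
with Levi decomposition `g = s ⊕ r` (`s` a semisimple subalgebra complementing the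
solvable radical `r`).  Then `r^⊥ ⊆ z(r)`: every element of the orthogonal of the
radical lies in the radical and commutes with it. -/
theorem radical_orthogonal_subset_center_radical
    (K : Type*) [Field K] [CharZero K]
    (L : Type*) [LieRing L] [LieAlgebra K L] [Module.Finite K L]
    (B : LinearMap.BilinForm K L)
    (hB : B.Nondegenerate)
    (hsymm : ∀ x y : L, B x y = B y x)
    (hinv : ∀ x y z : L, B ⁅x, y⁆ z = B x ⁅y, z⁆)
    (s : LieSubalgebra K L)
    (hs : LieAlgebra.IsSemisimple K s)
    (hLevi : IsCompl s.toSubmodule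
      (LieSubmodule.toSubmodule (LieAlgebra.radical K L)))
    (hnonsolv : ¬ LieAlgebra.IsSolvable L)
    (hnonsimple : ¬ LieAlgebra.IsSimple K L)
    (hirr : ∀ J : LieIdeal K L,
      (∀ x ∈ J, (∀ y ∈ J, B x y = 0) → x = 0) → J = ⊥ ∨ J = ⊤) :
    ∀ x ∈ B.orthogonal (LieSubmodule.toSubmodule (LieAlgebra.radical K L)),
      x ∈ LieAlgebra.radical K L ∧ ∀ y ∈ LieAlgebra.radical K L, ⁅x, y⁆ = 0 :=
  radical_orthogonal_subset_center_radical_general K L B hB hinv s hs hLevi hnonsolv hnonsimple hirr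
end

section
/- Let (g,B) be a non solvable, non simple, B-irreducible quadratic Lie algebra with Levi decomposition g = s ⊕ r, and suppose the Levi subalgebra s is simple. Then either r = r^perp or r^perp ⊆ [r,r]. -/
/-!
Write `W = r^⊥`. An ideal containing `r` meets `s` in an ideal of `s`, so it is either `r` or `g`.
Applied to `W + r` this gives `W ⊆ r`, since otherwise `r` would be a nondegenerate ideal; if
moreover `W ⊄ [r,r]`, applying it to `[r,r]^⊥ + r` gives `[r,r] ∩ W = 0`. Then every `a ∈ g`
agrees with some `z ∈ r` as a functional on `[r,r]`, and invariance gives `[a - z, r] ⊆ W`. So the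
ideal `{a | [a,r] ⊆ W}` supplements the solvable ideal `r`, hence contains the perfect algebra `s`,
and `s ⊕ W` is an ideal. It is nondegenerate, so it is `g`, and `r = W`.
-/

open LieAlgebra LieAlgebra.InvariantForm
open LinearMap (BilinForm)

lemma IsCompl.sup_inf_eq_of_le {α : Type*} [Lattice α] [BoundedOrder α] [IsModularLattice α]
    {S R W : α} (hSR : IsCompl S R) (hWR : W ≤ R) : (W ⊔ S) ⊓ R = W := by
  rw [sup_inf_assoc_of_le _ hWR, hSR.inf_eq_bot, sup_bot_eq]

namespace LinearMap.BilinForm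

variable {K M : Type*} [Field K] [AddCommGroup M] [Module K M]

lemma orthogonal_sup (B : BilinForm K M) (N N' : Submodule K M) :
    B.orthogonal (N ⊔ N') = B.orthogonal N ⊓ B.orthogonal N' := by
  ext x
  simp only [mem_orthogonal_iff, Submodule.mem_inf, Submodule.mem_sup]
  constructor
  · intro h
    exact ⟨fun n hn ↦ by simpa using h n ⟨n, hn, 0, N'.zero_mem, add_zero n⟩,
      fun n hn ↦ by simpa using h n ⟨0, N.zero_mem, n, hn, zero_add n⟩⟩
  · rintro ⟨h, h'⟩ _ ⟨n, hn, n', hn', rfl⟩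
    rw [map_add, LinearMap.add_apply, h n hn, h' n' hn', add_zero]

variable [FiniteDimensional K M] {B : BilinForm K M}

lemma exists_mem_forall_apply_eq {P Q : Submodule K M} (hPQ : Q ⊓ B.orthogonal P = ⊥) (a : M) :
    ∃ z ∈ P, ∀ c ∈ Q, B a c = B z c := by
  have hinj : Function.Injective (B.domRestrict₁₂ P Q).flip := by
    rw [← LinearMap.ker_eq_bot, LinearMap.ker_eq_bot']
    intro c hc
    have hcP : (c : M) ∈ Q ⊓ B.orthogonal P :=
      ⟨c.2, fun n hn ↦ by
        simpa [LinearMap.domRestrict₁₂_apply] using LinearMap.congr_fun hc ⟨n, hn⟩⟩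
    rw [hPQ] at hcP
    exact Subtype.ext hcP
  obtain ⟨z, hz⟩ := LinearMap.flip_injective_iff₁.mp hinj ((B a).domRestrict Q)
  exact ⟨z, z.2, fun c hc ↦ by
    simpa [LinearMap.domRestrict₁₂_apply] using (LinearMap.congr_fun hz ⟨c, hc⟩).symm⟩

lemma sup_orthogonal_inf_orthogonal_eq_bot (hB : B.Nondegenerate) (hBrefl : B.IsRefl)
    {S R : Submodule K M} (hSR : IsCompl S R) (hR : B.orthogonal R ≤ R) :
    (S ⊔ B.orthogonal R) ⊓ B.orthogonal (S ⊔ B.orthogonal R) = ⊥ := by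
  rw [B.orthogonal_sup, B.orthogonal_orthogonal hB hBrefl]
  calc (S ⊔ B.orthogonal R) ⊓ (B.orthogonal S ⊓ R)
      = (B.orthogonal R ⊔ S) ⊓ R ⊓ B.orthogonal S := by
        rw [sup_comm, inf_comm (B.orthogonal S), inf_assoc]
    _ = B.orthogonal (R ⊔ S) := by rw [hSR.sup_inf_eq_of_le hR, B.orthogonal_sup]
    _ = ⊥ := by rw [hSR.symm.sup_eq_top, B.orthogonal_top_eq_bot hB]

end LinearMap.BilinForm

section LieAlgebra

variable {K L : Type*} [Field K] [LieRing L] [LieAlgebra K L]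

lemma LieAlgebra.IsSimple.derivedSeries_eq_top [IsSimple K L] (k : ℕ) :
    derivedSeries K L k = ⊤ := by
  refine LieIdeal.derivedSeries_eq_top k ((IsSimple.eq_bot_or_eq_top _).resolve_left fun h ↦ ?_)
  exact IsSimple.non_abelian K ((lie_abelian_iff_equiv_lie_abelian LieIdeal.topEquiv).mp
    ((abelian_iff_derived_one_eq_bot ⊤).mpr h))

lemma LieIdeal.exists_derivedSeries_le_of_sup_eq_top {R I : LieIdeal K L} [IsSolvable R]
    (h : R ⊔ I = ⊤) : ∃ k, derivedSeries K L k ≤ I := by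
  obtain ⟨k, hk⟩ := IsSolvable.solvable (R := K) (L := R)
  refine ⟨k, ?_⟩
  have := derivedSeriesOfIdeal_add_le_add R I k 0
  rw [add_zero, (LieIdeal.derivedSeries_eq_bot_iff R k).mp hk, derivedSeriesOfIdeal_zero] at this
  simpa [derivedSeries_def, ← h] using this

lemma LieAlgebra.radical_ne_top_of_not_isSolvable [Module.Finite K L] (h : ¬ IsSolvable L) :
    radical K L ≠ ⊤ := fun htop ↦
  h ((solvable_iff_equiv_solvable LieIdeal.topEquiv).mp (htop ▸ radicalIsSolvable K L))

lemma LinearMap.BilinForm.lieInvariant_iff_lie_apply {B : BilinForm K L} :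
    B.lieInvariant L ↔ ∀ x y z : L, B ⁅x, y⁆ z = B x ⁅y, z⁆ := by
  refine ⟨fun h x y z ↦ ?_, fun h x y z ↦ ?_⟩
  · rw [← neg_inj, ← h y x z, ← lie_skew, map_neg, LinearMap.neg_apply, neg_neg]
  · rw [← h y x z, ← lie_skew, map_neg, LinearMap.neg_apply]

namespace LieSubalgebra

variable {s : LieSubalgebra K L}

lemma le_derivedSeries_of_isSimple (hs : IsSimple K s) (k : ℕ) :
    s.toSubmodule ≤ (derivedSeries K L k).toSubmodule := by
  intro x hx
  have hmap := LieIdeal.derivedSeries_map_le (f := s.incl) k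
  rw [hs.derivedSeries_eq_top k] at hmap
  exact hmap (LieIdeal.mem_map (f := s.incl) (x := ⟨x, hx⟩) (LieSubmodule.mem_top _))

lemma toSubmodule_le_of_sup_eq_top (hs : IsSimple K s) {R I : LieIdeal K L} [IsSolvable R]
    (h : R ⊔ I = ⊤) : s.toSubmodule ≤ I.toSubmodule := by
  obtain ⟨k, hk⟩ := LieIdeal.exists_derivedSeries_le_of_sup_eq_top h
  exact (le_derivedSeries_of_isSimple hs k).trans hk

lemma le_or_eq_top_of_isCompl (hs : IsSimple K s) {R J : LieIdeal K L}
    (hsR : IsCompl s.toSubmodule R.toSubmodule) (hRJ : R ≤ J) : J ≤ R ∨ J = ⊤ := by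
  rcases hs.eq_bot_or_eq_top (J.comap s.incl) with hJ | hJ
  · left
    have hdisj : s.toSubmodule ⊓ J.toSubmodule = ⊥ := by
      rw [Submodule.eq_bot_iff]
      rintro x ⟨hxs, hxJ⟩
      have : (⟨x, hxs⟩ : s) ∈ J.comap s.incl := hxJ
      rw [hJ, LieSubmodule.mem_bot] at this
      exact congrArg Subtype.val this
    rw [← LieSubmodule.toSubmodule_le_toSubmodule]
    refine le_of_eq ?_
    calc J.toSubmodule = (R.toSubmodule ⊔ s.toSubmodule) ⊓ J.toSubmodule := by
          rw [sup_comm, hsR.sup_eq_top, top_inf_eq]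
      _ = R.toSubmodule := by
          rw [sup_inf_assoc_of_le _ ((LieSubmodule.toSubmodule_le_toSubmodule _ _).mpr hRJ),
            hdisj, sup_bot_eq]
  · right
    rw [← LieSubmodule.toSubmodule_eq_top, eq_top_iff, ← hsR.sup_eq_top]
    refine sup_le (fun x hxs ↦ ?_) hRJ
    have : (⟨x, hxs⟩ : s) ∈ J.comap s.incl := hJ ▸ LieSubmodule.mem_top _
    exact this

lemma isSimple_of_isCompl_bot (hs : IsSimple K s)
    (hsR : IsCompl s.toSubmodule (⊥ : LieIdeal K L).toSubmodule) : IsSimple K L :=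
  ⟨fun _ ↦ (le_or_eq_top_of_isCompl hs hsR bot_le).imp le_bot_iff.mp id,
    fun _ ↦ hs.non_abelian ⟨fun a b ↦ Subtype.ext (trivial_lie_zero L L a b)⟩⟩

lemma exists_lieIdeal_toSubmodule_eq_sup {R W : LieIdeal K L}
    (hsR : s.toSubmodule ⊔ R.toSubmodule = ⊤) (hsW : ∀ a ∈ s, ∀ u ∈ R, ⁅a, u⁆ ∈ W) :
    ∃ J : LieIdeal K L, J.toSubmodule = s.toSubmodule ⊔ W.toSubmodule := by
  refine ⟨{ toSubmodule := s.toSubmodule ⊔ W.toSubmodule, lie_mem := ?_ }, rfl⟩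
  intro x m hm
  obtain ⟨a, ha, w, hw, rfl⟩ := Submodule.mem_sup.mp hm
  obtain ⟨b, hb, r, hr, rfl⟩ := Submodule.mem_sup.mp (hsR ▸ Submodule.mem_top : x ∈ _)
  rw [lie_add, add_lie]
  refine add_mem (add_mem (Submodule.mem_sup_left (s.lie_mem hb ha)) (Submodule.mem_sup_right ?_))
    (Submodule.mem_sup_right (W.lie_mem hw))
  rw [← lie_skew]
  exact W.neg_mem (hsW a ha r hr)

end LieSubalgebra

namespace LieAlgebra.InvariantForm

variable [Module.Finite K L] {B : BilinForm K L} (hBinv : B.lieInvariant L)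

lemma inf_orthogonal_eq_bot_of_not_le (hB : B.Nondegenerate) (hBrefl : B.IsRefl)
    {s : LieSubalgebra K L} (hs : IsSimple K s) {R : LieIdeal K L}
    (hsR : IsCompl s.toSubmodule R.toSubmodule) (J : LieIdeal K L)
    (hJ : ¬ orthogonal B hBinv J ≤ R) :
    J.toSubmodule ⊓ B.orthogonal R.toSubmodule = ⊥ := by
  have htop : orthogonal B hBinv J ⊔ R = ⊤ :=
    (LieSubalgebra.le_or_eq_top_of_isCompl hs hsR le_sup_right).resolve_left
      fun h ↦ hJ (le_sup_left.trans h)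
  have := congrArg (fun N : LieIdeal K L ↦ B.orthogonal N.toSubmodule) htop
  simpa [B.orthogonal_sup, B.orthogonal_orthogonal hB hBrefl, B.orthogonal_top_eq_bot hB] using this

-- The idealizer is the ideal `{a | ⁅a, R⁆ ⊆ R^⊥}`.
lemma sup_idealizer_eq_top {R : LieIdeal K L}
    (hRR : (⁅R, R⁆ : LieIdeal K L).toSubmodule ⊓ B.orthogonal R.toSubmodule = ⊥) :
    R ⊔ (LieSubmodule.comap (LieSubmodule.incl R) (orthogonal B hBinv R)).idealizer = ⊤ := by
  rw [eq_top_iff]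
  intro a _
  obtain ⟨z, hzR, hz⟩ := B.exists_mem_forall_apply_eq hRR a
  refine (LieSubmodule.mem_sup _ _ a).mpr ⟨z, hzR, a - z, ?_, add_sub_cancel z a⟩
  rintro ⟨u, hu⟩
  simp only [LieSubmodule.mem_comap, LieSubmodule.incl_apply, LieSubmodule.coe_bracket,
    mem_orthogonal]
  intro y hy
  have hinv := B.lieInvariant_iff_lie_apply.mp hBinv
  calc B y ⁅a - z, u⁆ = B ⁅y, a - z⁆ u := (hinv _ _ _).symm
    _ = -B (a - z) ⁅y, u⁆ := by rw [← lie_skew, map_neg, LinearMap.neg_apply, hinv]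
    _ = 0 := by
      rw [map_sub, LinearMap.sub_apply, hz _ (LieSubmodule.lie_mem_lie hy hu), sub_self, neg_zero]

end LieAlgebra.InvariantForm

end LieAlgebra

theorem radical_eq_orth_or_orth_le_derived_general
    (K : Type*) [Field K]
    (L : Type*) [LieRing L] [LieAlgebra K L] [Module.Finite K L]
    (B : LinearMap.BilinForm K L)
    (hB : B.Nondegenerate)
    (hsymm : ∀ x y : L, B x y = B y x)
    (hinv : ∀ x y z : L, B ⁅x, y⁆ z = B x ⁅y, z⁆)
    (s : LieSubalgebra K L)
    (hs : LieAlgebra.IsSimple K s)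
    (hLevi : IsCompl s.toSubmodule
      (LieSubmodule.toSubmodule (LieAlgebra.radical K L)))
    (hnonsolv : ¬ LieAlgebra.IsSolvable L)
    (hnonsimple : ¬ LieAlgebra.IsSimple K L)
    (hirr : ∀ J : LieIdeal K L,
      (∀ x ∈ J, (∀ y ∈ J, B x y = 0) → x = 0) → J = ⊥ ∨ J = ⊤) :
    LieSubmodule.toSubmodule (LieAlgebra.radical K L)
        = B.orthogonal (LieSubmodule.toSubmodule (LieAlgebra.radical K L)) ∨
      B.orthogonal (LieSubmodule.toSubmodule (LieAlgebra.radical K L))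
        ≤ LieSubmodule.toSubmodule ⁅LieAlgebra.radical K L, LieAlgebra.radical K L⁆ := by
  have hBrefl : B.IsRefl := fun x y h ↦ hsymm x y ▸ h
  have hBinv : B.lieInvariant L := B.lieInvariant_iff_lie_apply.mpr hinv
  have hirr' (J : LieIdeal K L) (hJ : J.toSubmodule ⊓ B.orthogonal J.toSubmodule = ⊥) :
      J = ⊥ ∨ J = ⊤ :=
    hirr J fun x hx hxJ ↦ (Submodule.mem_bot K).mp <|
      hJ ▸ ⟨hx, fun y hy ↦ hsymm y x ▸ hxJ y hy⟩
  set R := radical K L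
  have hR : R ≠ ⊤ := radical_ne_top_of_not_isSolvable hnonsolv
  have hWR : B.orthogonal R.toSubmodule ≤ R.toSubmodule := by
    by_contra h
    rcases hirr' R (inf_orthogonal_eq_bot_of_not_le hBinv hB hBrefl hs hLevi R h) with h | h
    · exact hnonsimple (LieSubalgebra.isSimple_of_isCompl_bot hs (h ▸ hLevi))
    · exact hR h
  refine or_iff_not_imp_right.mpr fun hWD ↦ ?_
  have hDW := inf_orthogonal_eq_bot_of_not_le hBinv hB hBrefl hs hLevi ⁅R, R⁆ fun h ↦ hWD <| by
    simpa [B.orthogonal_orthogonal hB hBrefl] using B.orthogonal_le h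
  have hsW : ∀ a ∈ s, ∀ u ∈ R, ⁅a, u⁆ ∈ orthogonal B hBinv R := fun a ha u hu ↦ by
    have := LieSubalgebra.toSubmodule_le_of_sup_eq_top hs (sup_idealizer_eq_top hBinv hDW) ha
    simp only [LieSubmodule.mem_toSubmodule, LieSubmodule.mem_idealizer] at this
    exact this ⟨u, hu⟩
  obtain ⟨J, hJ⟩ := LieSubalgebra.exists_lieIdeal_toSubmodule_eq_sup hLevi.sup_eq_top hsW
  rcases hirr' J (hJ ▸ B.sup_orthogonal_inf_orthogonal_eq_bot hB hBrefl hLevi hWR) with h | h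
  · have hs0 : s.toSubmodule = ⊥ := by
      simpa [h] using (hJ ▸ le_sup_left : s.toSubmodule ≤ J.toSubmodule)
    exact absurd ((LieSubmodule.toSubmodule_eq_top _).mp (eq_top_of_bot_isCompl (hs0 ▸ hLevi))) hR
  · have hJtop : B.orthogonal R.toSubmodule ⊔ s.toSubmodule = ⊤ := by
      simpa [h, sup_comm] using hJ.symm
    simpa [hJtop] using hLevi.sup_inf_eq_of_le hWR

/-- Let `(g,B)` be a non-solvable, non-simple, `B`-irreducible quadratic Lie algebra with
Levi decomposition `g = s ⊕ r`, where the Levi subalgebra `s` is simple.  Then either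
`r = r^⊥` or `r^⊥ ⊆ [r,r]`. -/
theorem radical_eq_orth_or_orth_le_derived
    (K : Type*) [Field K] [CharZero K]
    (L : Type*) [LieRing L] [LieAlgebra K L] [Module.Finite K L]
    (B : LinearMap.BilinForm K L)
    (hB : B.Nondegenerate)
    (hsymm : ∀ x y : L, B x y = B y x)
    (hinv : ∀ x y z : L, B ⁅x, y⁆ z = B x ⁅y, z⁆)
    (s : LieSubalgebra K L)
    (hs : LieAlgebra.IsSimple K s)
    (hLevi : IsCompl s.toSubmodule
      (LieSubmodule.toSubmodule (LieAlgebra.radical K L)))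
    (hnonsolv : ¬ LieAlgebra.IsSolvable L)
    (hnonsimple : ¬ LieAlgebra.IsSimple K L)
    (hirr : ∀ J : LieIdeal K L,
      (∀ x ∈ J, (∀ y ∈ J, B x y = 0) → x = 0) → J = ⊥ ∨ J = ⊤) :
    LieSubmodule.toSubmodule (LieAlgebra.radical K L)
        = B.orthogonal (LieSubmodule.toSubmodule (LieAlgebra.radical K L)) ∨
      B.orthogonal (LieSubmodule.toSubmodule (LieAlgebra.radical K L))
        ≤ LieSubmodule.toSubmodule ⁅LieAlgebra.radical K L, LieAlgebra.radical K L⁆ :=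
  radical_eq_orth_or_orth_le_derived_general K L B hB hsymm hinv s hs hLevi hnonsolv hnonsimple hirr
end

section
/- Let (g,B) be a non solvable, non simple, B-irreducible quadratic Lie algebra with Levi decomposition g = s ⊕ r and suppose r = r^perp. Then s is simple, r is abelian, and g is isomorphic to the trivial T*-extension T_0^*(s) = s ⋉ s* (semidirect product with the coadjoint action, s* abelian). -/
/-! Since `r = r^⊥`, the form vanishes on `r × r`; by invariance `B ⁅x, y⁆ z = B x ⁅y, z⁆ = 0`
for `x, y ∈ r`, so `r` is abelian. The map `w ↦ B w ·|_s` identifies `r` with `s^*`: it is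
injective because a `w ∈ r` with `B w s = 0` is orthogonal to `s ⊕ r = L`, and
`dim r = dim L - dim r = dim s`. Writing `a = x + w` along `L = s ⊕ r`, the map
`a ↦ (x, B w ·|_s)` carries the bracket of `L` to that of `s ⋉ s^*`, again by invariance and
`B(r, r) = 0`. If `s = I ⊕ I'` with ideals `I, I'`, the preimage of `I ⊕ I'^0` is a
`B`-nondegenerate ideal of `L` meeting `s` in `I`, so irreducibility forces `I = 0` or `I = s`;
and `s` is not abelian, for otherwise `s = 0` and `L = r` would be solvable. -/

open Module

namespace LinearMap.BilinForm

variable {K V : Type*} [Field K] [AddCommGroup V] [Module K V] {B : LinearMap.BilinForm K V}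
  {p q : Submodule K V}

theorem injective_compl₁₂_subtype_of_isCompl (hB : B.SeparatingLeft) (hpq : IsCompl p q)
    (hq : q ≤ B.orthogonal q) : Function.Injective (B.compl₁₂ q.subtype p.subtype) := by
  rw [← LinearMap.ker_eq_bot, Submodule.eq_bot_iff]
  intro w hw
  have hwp : ∀ z ∈ p, B w z = 0 := fun z hz => by
    simpa using LinearMap.congr_fun (LinearMap.mem_ker.mp hw) ⟨z, hz⟩
  have hwq : ∀ v ∈ q, B w v = 0 := fun v hv => hq hv w w.2
  refine Subtype.ext (hB _ fun y => ?_)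
  obtain ⟨z, hz, v, hv, rfl⟩ :=
    Submodule.mem_sup.mp (hpq.sup_eq_top ▸ Submodule.mem_top : y ∈ p ⊔ q)
  rw [map_add, hwp z hz, hwq v hv, add_zero]

theorem finrank_eq_of_isCompl_of_eq_orthogonal [FiniteDimensional K V] (hB : B.Nondegenerate)
    (hpq : IsCompl p q) (hq : q = B.orthogonal q) : finrank K q = finrank K p := by
  have hcompl := Submodule.finrank_add_eq_of_isCompl hpq
  have horth := finrank_orthogonal hB q
  rw [← hq] at horth
  omega

noncomputable def equivDualOfIsCompl [FiniteDimensional K V] (hB : B.Nondegenerate)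
    (hpq : IsCompl p q) (hq : q = B.orthogonal q) : q ≃ₗ[K] Dual K p :=
  have hinj := injective_compl₁₂_subtype_of_isCompl hB.1 hpq hq.le
  .ofBijective _ ⟨hinj, (LinearMap.injective_iff_surjective_of_finrank_eq_finrank (by
    rw [Subspace.dual_finrank_eq, finrank_eq_of_isCompl_of_eq_orthogonal hB hpq hq])).mp hinj⟩

noncomputable def equivProdDualOfIsCompl [FiniteDimensional K V] (hB : B.Nondegenerate)
    (hpq : IsCompl p q) (hq : q = B.orthogonal q) : V ≃ₗ[K] p × Dual K p :=
  (p.prodEquivOfIsCompl q hpq).symm ≪≫ₗ (LinearEquiv.refl K p).prodCongr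
    (equivDualOfIsCompl hB hpq hq)

variable [FiniteDimensional K V] (hB : B.Nondegenerate) (hpq : IsCompl p q)
  (hq : q = B.orthogonal q)

@[simp]
theorem equivProdDualOfIsCompl_apply_fst (v : V) :
    (equivProdDualOfIsCompl hB hpq hq v).1 = p.projectionOnto q hpq v := rfl

@[simp]
theorem equivProdDualOfIsCompl_apply_snd_apply (v : V) (z : p) :
    (equivProdDualOfIsCompl hB hpq hq v).2 z = B (q.projectionOnto p hpq.symm v) z := by
  simp only [equivProdDualOfIsCompl, LinearEquiv.trans_apply,
    Submodule.prodEquivOfIsCompl_symm_apply, LinearEquiv.prodCongr_apply]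
  rfl

end LinearMap.BilinForm

theorem LieIdeal.isLieAbelian_of_isotropic {K L : Type*} [CommRing K] [LieRing L]
    [LieAlgebra K L] {B : LinearMap.BilinForm K L} (hB : B.SeparatingLeft)
    (hinv : ∀ x y z : L, B ⁅x, y⁆ z = B x ⁅y, z⁆) {r : LieIdeal K L}
    (hr : ∀ x ∈ r, ∀ y ∈ r, B x y = 0) : IsLieAbelian r where
  trivial x y := Subtype.ext <| hB _ fun z => by
    change B ⁅(x : L), y⁆ z = 0
    rw [hinv]
    exact hr x x.2 _ (lie_mem_left K L r y z y.2)

theorem LieAlgebra.isSolvable_of_isCompl_radical_of_subsingleton {K L : Type*} [CommRing K]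
    [LieRing L] [LieAlgebra K L] [IsNoetherian K L] {s : LieSubalgebra K L} [Subsingleton s]
    (hs : IsCompl s.toSubmodule (radical K L).toSubmodule) : IsSolvable L := by
  have hrad : radical K L = ⊤ := (LieSubmodule.toSubmodule_eq_top _).mp <|
    eq_top_of_bot_isCompl (s.toSubmodule.eq_bot_of_subsingleton ▸ hs)
  have : IsSolvable (⊤ : LieIdeal K L) := hrad ▸ inferInstance
  exact (solvable_iff_equiv_solvable LieIdeal.topEquiv).mp this

section TStarExtension

variable {K L : Type*} [Field K] [LieRing L] [LieAlgebra K L] [FiniteDimensional K L]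
  {B : LinearMap.BilinForm K L} {s : LieSubalgebra K L} {r : LieIdeal K L}

noncomputable def tStarEquiv (hB : B.Nondegenerate) (hsr : IsCompl s.toSubmodule r.toSubmodule)
    (hr : r.toSubmodule = B.orthogonal r.toSubmodule) : L ≃ₗ[K] s × Module.Dual K s :=
  B.equivProdDualOfIsCompl hB hsr hr

variable (hB : B.Nondegenerate) (hsr : IsCompl s.toSubmodule r.toSubmodule)
  (hr : r.toSubmodule = B.orthogonal r.toSubmodule)

theorem tStarEquiv_add_apply (u : s) {w : L} (hw : w ∈ r) :
    (tStarEquiv hB hsr hr (u + w)).1 = u ∧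
      ∀ z : s, (tStarEquiv hB hsr hr (u + w)).2 z = B w z := by
  have hwr : r.toSubmodule.projectionOnto s.toSubmodule hsr.symm w = ⟨w, hw⟩ :=
    Submodule.projectionOnto_apply_of_mem_left _ hw
  have hws : s.toSubmodule.projectionOnto r.toSubmodule hsr w = 0 :=
    Submodule.projectionOnto_apply_of_mem_right _ hw
  refine ⟨?_, fun z => ?_⟩
  · rw [tStarEquiv, LinearMap.BilinForm.equivProdDualOfIsCompl_apply_fst, map_add,
      Submodule.projectionOnto_apply_left, hws, add_zero]
  · rw [tStarEquiv, LinearMap.BilinForm.equivProdDualOfIsCompl_apply_snd_apply, map_add,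
      Submodule.projectionOnto_apply_of_mem_right _ u.2, hwr, zero_add]

theorem exists_eq_tStarEquiv_fst_add (a : L) :
    ∃ w ∈ r, a = (tStarEquiv hB hsr hr a).1 + w ∧
      ∀ z : s, (tStarEquiv hB hsr hr a).2 z = B w z :=
  ⟨_, Submodule.coe_mem (Submodule.projectionOnto _ _ hsr.symm a),
    (Submodule.projection_add_projection_eq_self hsr a).symm,
    LinearMap.BilinForm.equivProdDualOfIsCompl_apply_snd_apply hB hsr hr a⟩

theorem tStarEquiv_lie (hinv : ∀ x y z : L, B ⁅x, y⁆ z = B x ⁅y, z⁆) (a b : L) :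
    (tStarEquiv hB hsr hr ⁅a, b⁆).1 = ⁅(tStarEquiv hB hsr hr a).1, (tStarEquiv hB hsr hr b).1⁆ ∧
      ∀ z : s, (tStarEquiv hB hsr hr ⁅a, b⁆).2 z =
        (tStarEquiv hB hsr hr b).2 ⁅z, (tStarEquiv hB hsr hr a).1⁆ -
          (tStarEquiv hB hsr hr a).2 ⁅z, (tStarEquiv hB hsr hr b).1⁆ := by
  obtain ⟨w, hw, ha, hfa⟩ := exists_eq_tStarEquiv_fst_add hB hsr hr a
  obtain ⟨v, hv, hb, hfb⟩ := exists_eq_tStarEquiv_fst_add hB hsr hr b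
  set x := (tStarEquiv hB hsr hr a).1
  set y := (tStarEquiv hB hsr hr b).1
  have hlie : ⁅a, b⁆ = ↑⁅x, y⁆ + (⁅(x : L), v⁆ + ⁅w, (y : L)⁆ + ⁅w, v⁆) := by
    rw [ha, hb, LieSubalgebra.coe_bracket]
    simp only [add_lie, lie_add]
    abel
  have hmem : ⁅(x : L), v⁆ + ⁅w, (y : L)⁆ + ⁅w, v⁆ ∈ r :=
    add_mem (add_mem (lie_mem_right K L r _ _ hv) (lie_mem_left K L r _ _ hw))
      (lie_mem_left K L r _ _ hw)
  obtain ⟨hfst, hsnd⟩ := tStarEquiv_add_apply hB hsr hr ⁅x, y⁆ hmem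
  rw [hlie]
  refine ⟨hfst, fun z => ?_⟩
  have hwv : B ⁅w, v⁆ z = 0 := by
    rw [hinv]
    exact hr.le (lie_mem_left K L r _ _ hv) w hw
  have hxv : B ⁅(x : L), v⁆ z = B v ⁅(z : L), x⁆ := by
    rw [← lie_skew (x : L) v, map_neg, LinearMap.neg_apply, hinv, ← lie_skew (z : L) (x : L),
      map_neg]
  have hwy : B ⁅w, (y : L)⁆ z = -B w ⁅(z : L), y⁆ := by
    rw [hinv, ← lie_skew (z : L) (y : L), map_neg, neg_neg]
  rw [hsnd, hfa, hfb, LieSubalgebra.coe_bracket, LieSubalgebra.coe_bracket, map_add, map_add,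
    LinearMap.add_apply, LinearMap.add_apply, hwv, add_zero, hxv, hwy, sub_eq_add_neg]

theorem bilin_apply_eq_tStarEquiv (hsymm : ∀ x y : L, B x y = B y x) (a b : L) :
    B a b = B (tStarEquiv hB hsr hr a).1 (tStarEquiv hB hsr hr b).1 +
      (tStarEquiv hB hsr hr a).2 (tStarEquiv hB hsr hr b).1 +
        (tStarEquiv hB hsr hr b).2 (tStarEquiv hB hsr hr a).1 := by
  obtain ⟨w, hw, ha, hfa⟩ := exists_eq_tStarEquiv_fst_add hB hsr hr a
  obtain ⟨v, hv, hb, hfb⟩ := exists_eq_tStarEquiv_fst_add hB hsr hr b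
  set x := (tStarEquiv hB hsr hr a).1
  set y := (tStarEquiv hB hsr hr b).1
  rw [hfa, hfb, hsymm v, ha, hb]
  simp only [map_add, LinearMap.add_apply]
  rw [hr.le hv w hw]
  ring

theorem tStarEquiv_coe (u : s) : tStarEquiv hB hsr hr u = (u, 0) := by
  obtain ⟨hfst, hsnd⟩ := tStarEquiv_add_apply hB hsr hr u (zero_mem r)
  rw [add_zero] at hfst hsnd
  exact Prod.ext hfst (LinearMap.ext fun z => by rw [hsnd, map_zero]; rfl)

theorem tStarEquiv_lie_mem_prod_dualAnnihilator (hinv : ∀ x y z : L, B ⁅x, y⁆ z = B x ⁅y, z⁆)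
    {I I' : LieIdeal K s} (hII' : Disjoint I.toSubmodule I'.toSubmodule) (x : L) {m : L}
    (hm : tStarEquiv hB hsr hr m ∈ I.toSubmodule.prod I'.toSubmodule.dualAnnihilator) :
    tStarEquiv hB hsr hr ⁅x, m⁆ ∈ I.toSubmodule.prod I'.toSubmodule.dualAnnihilator := by
  obtain ⟨hmI, hmI'⟩ := Submodule.mem_prod.mp hm
  obtain ⟨hfst, hsnd⟩ := tStarEquiv_lie hB hsr hr hinv x m
  refine Submodule.mem_prod.mpr ⟨hfst ▸ lie_mem_right K s I _ _ hmI,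
    (Submodule.mem_dualAnnihilator _).mpr fun z hz => ?_⟩
  have hzm : ⁅z, (tStarEquiv hB hsr hr m).1⁆ = 0 := Submodule.disjoint_def.mp hII' _
    (lie_mem_right K s I z _ hmI) (lie_mem_left K s I' z _ hz)
  rw [hsnd, hzm, map_zero, sub_zero]
  exact (Submodule.mem_dualAnnihilator _).mp hmI' _ (lie_mem_left K s I' z _ hz)

theorem eq_zero_of_tStarEquiv_mem_prod_dualAnnihilator (hsymm : ∀ x y : L, B x y = B y x)
    {I I' : LieIdeal K s} (hII' : IsCompl I.toSubmodule I'.toSubmodule) {x : L}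
    (hx : tStarEquiv hB hsr hr x ∈ I.toSubmodule.prod I'.toSubmodule.dualAnnihilator)
    (hxJ : ∀ y, tStarEquiv hB hsr hr y ∈ I.toSubmodule.prod I'.toSubmodule.dualAnnihilator →
      B x y = 0) :
    x = 0 := by
  set e := tStarEquiv hB hsr hr
  obtain ⟨hx₁, hx₂⟩ := Submodule.mem_prod.mp hx
  have hfst : (e x).1 = 0 := by
    refine Submodule.disjoint_def.mp hII'.disjoint _ hx₁ <|
      (Subspace.forall_mem_dualAnnihilator_apply_eq_zero_iff _ _).mp fun g hg => ?_
    have := hxJ (e.symm (0, g)) (by simpa using hg)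
    rw [bilin_apply_eq_tStarEquiv hB hsr hr hsymm, e.apply_symm_apply] at this
    simpa using this
  have hx₃ : (e x).2 ∈ I.toSubmodule.dualAnnihilator :=
    (Submodule.mem_dualAnnihilator _).mpr fun u hu => by
      have := hxJ u (by simpa [e, tStarEquiv_coe] using hu)
      rw [bilin_apply_eq_tStarEquiv hB hsr hr hsymm, tStarEquiv_coe] at this
      simpa [e, hfst] using this
  have hsnd : (e x).2 = 0 := by
    have := Submodule.mem_inf.mpr ⟨hx₃, hx₂⟩
    rwa [← Submodule.dualAnnihilator_sup_eq, hII'.sup_eq_top, Submodule.dualAnnihilator_top,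
      Submodule.mem_bot] at this
  exact e.map_eq_zero_iff.mp (Prod.ext hfst hsnd)

theorem exists_nondegenerate_lieIdeal_of_isCompl (hB : B.Nondegenerate)
    (hsr : IsCompl s.toSubmodule r.toSubmodule) (hr : r.toSubmodule = B.orthogonal r.toSubmodule)
    (hsymm : ∀ x y : L, B x y = B y x)
    (hinv : ∀ x y z : L, B ⁅x, y⁆ z = B x ⁅y, z⁆) {I I' : LieIdeal K s}
    (hII' : IsCompl I.toSubmodule I'.toSubmodule) :
    ∃ J : LieIdeal K L, (∀ x ∈ J, (∀ y ∈ J, B x y = 0) → x = 0) ∧ ∀ u : s, (u : L) ∈ J ↔ u ∈ I :=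
  ⟨{ toSubmodule := (I.toSubmodule.prod I'.toSubmodule.dualAnnihilator).comap
        (tStarEquiv hB hsr hr).toLinearMap
     lie_mem := tStarEquiv_lie_mem_prod_dualAnnihilator hB hsr hr hinv hII'.disjoint _ },
    fun _ hx hxJ => eq_zero_of_tStarEquiv_mem_prod_dualAnnihilator hB hsr hr hsymm hII' hx hxJ,
    fun u => by simp [tStarEquiv_coe]⟩

end TStarExtension

theorem trivial_T_star_extension_of_radical_eq_orthogonal_general
    (K : Type*) [Field K]
    (L : Type*) [LieRing L] [LieAlgebra K L] [Module.Finite K L]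
    (B : LinearMap.BilinForm K L)
    (hB : B.Nondegenerate)
    (hsymm : ∀ x y : L, B x y = B y x)
    (hinv : ∀ x y z : L, B ⁅x, y⁆ z = B x ⁅y, z⁆)
    (s : LieSubalgebra K L)
    (hs : LieAlgebra.IsSemisimple K s)
    (hLevi : IsCompl s.toSubmodule
      (LieSubmodule.toSubmodule (LieAlgebra.radical K L)))
    (hnonsolv : ¬ LieAlgebra.IsSolvable L)
    (hirr : ∀ J : LieIdeal K L,
      (∀ x ∈ J, (∀ y ∈ J, B x y = 0) → x = 0) → J = ⊥ ∨ J = ⊤)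
    (hrr : LieSubmodule.toSubmodule (LieAlgebra.radical K L)
      = B.orthogonal (LieSubmodule.toSubmodule (LieAlgebra.radical K L))) :
    LieAlgebra.IsSimple K s ∧
    IsLieAbelian (LieAlgebra.radical K L) ∧
    ∃ e : L ≃ₗ[K] (s × Module.Dual K s),
      ∀ a b : L,
        (e ⁅a, b⁆).1 = ⁅(e a).1, (e b).1⁆ ∧
        ∀ z : s, (e ⁅a, b⁆).2 z = (e b).2 ⁅z, (e a).1⁆ - (e a).2 ⁅z, (e b).1⁆ := by
  have hideal (I : LieIdeal K s) : I = ⊥ ∨ I = ⊤ := by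
    obtain ⟨J, hJ, hJI⟩ := exists_nondegenerate_lieIdeal_of_isCompl hB hLevi hrr hsymm hinv
      (LieSubmodule.isCompl_toSubmodule.mpr (isCompl_compl (x := I)))
    refine (hirr J hJ).imp (fun hJ => ?_) (fun hJ => ?_) <;> ext u <;> simp [← hJI, hJ]
  have hnonabelian : ¬ IsLieAbelian s := fun _ =>
    have : Subsingleton s := LieAlgebra.subsingleton_of_hasTrivialRadical_lie_abelian K s
    hnonsolv (LieAlgebra.isSolvable_of_isCompl_radical_of_subsingleton hLevi)
  exact ⟨⟨hideal, hnonabelian⟩,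
    LieIdeal.isLieAbelian_of_isotropic hB.1 hinv fun x hx y hy => hrr.le hy x hx,
    tStarEquiv hB hLevi hrr, tStarEquiv_lie hB hLevi hrr hinv⟩

/-- Let `(g,B)` be a non-solvable, non-simple, `B`-irreducible quadratic Lie algebra with
Levi decomposition `g = s ⊕ r` and suppose `r = r^⊥`.  Then `s` is simple, `r` is abelian,
and `g` is isomorphic to the trivial `T^*`-extension `T₀^*(s) = s ⋉ s^*`, i.e. there is a
linear isomorphism `e : g ≃ s × s^*` transporting the bracket of `g` to the bracket
`⁅(x,f),(y,h)⁆ = (⁅x,y⁆, π(x)h - π(y)f)` of the semidirect product with the coadjoint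
action `(π(x)h)(z) = -h ⁅x,z⁆ = h ⁅z,x⁆`. -/
theorem trivial_T_star_extension_of_radical_eq_orthogonal
    (K : Type*) [Field K] [CharZero K]
    (L : Type*) [LieRing L] [LieAlgebra K L] [Module.Finite K L]
    (B : LinearMap.BilinForm K L)
    (hB : B.Nondegenerate)
    (hsymm : ∀ x y : L, B x y = B y x)
    (hinv : ∀ x y z : L, B ⁅x, y⁆ z = B x ⁅y, z⁆)
    (s : LieSubalgebra K L)
    (hs : LieAlgebra.IsSemisimple K s)
    (hLevi : IsCompl s.toSubmodule
      (LieSubmodule.toSubmodule (LieAlgebra.radical K L)))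
    (hnonsolv : ¬ LieAlgebra.IsSolvable L)
    (hnonsimple : ¬ LieAlgebra.IsSimple K L)
    (hirr : ∀ J : LieIdeal K L,
      (∀ x ∈ J, (∀ y ∈ J, B x y = 0) → x = 0) → J = ⊥ ∨ J = ⊤)
    (hrr : LieSubmodule.toSubmodule (LieAlgebra.radical K L)
      = B.orthogonal (LieSubmodule.toSubmodule (LieAlgebra.radical K L))) :
    LieAlgebra.IsSimple K s ∧
    IsLieAbelian (LieAlgebra.radical K L) ∧
    ∃ e : L ≃ₗ[K] (s × Module.Dual K s),
      ∀ a b : L,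
        (e ⁅a, b⁆).1 = ⁅(e a).1, (e b).1⁆ ∧
        ∀ z : s, (e ⁅a, b⁆).2 z = (e b).2 ⁅z, (e a).1⁆ - (e a).2 ⁅z, (e b).1⁆ :=
  trivial_T_star_extension_of_radical_eq_orthogonal_general K L B hB hsymm hinv s hs hLevi hnonsolv
    hirr hrr
end

section
/- Let d be a finite-dimensional solvable Lie algebra of dimension at most 3 over a field of characteristic 0 admitting a nondegenerate symmetric invariant bilinear form. Then d is abelian. -/
/-!
For a nondegenerate invariant form the centre `z` is the orthogonal of the derived algebra, so
`q := dim (L ⧸ z) = dim [L, L]`. The bracket vanishes as soon as one argument is central, so it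
factors through an alternating map on `L ⧸ z`, i.e. through `⋀² (L ⧸ z)`; hence `q ≤ q.choose 2`.
Solvability makes `[L, L]` proper, so `q < dim L ≤ 3`, and the only such `q` is `0`.
-/

open Module Submodule LieAlgebra

namespace LinearMap.IsAlt

section CommRing

variable {R M N : Type*} [CommRing R] [AddCommGroup M] [Module R M] [AddCommGroup N] [Module R N]
  {f : M →ₗ[R] M →ₗ[R] N}

def toAlternatingMap (hf : f.IsAlt) : M [⋀^Fin 2]→ₗ[R] N where
  toFun v := f (v 0) (v 1)
  map_update_add' v i x y := by fin_cases i <;> simp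
  map_update_smul' v i c x := by fin_cases i <;> simp
  map_eq_zero_of_eq' v i j hij hne := by
    fin_cases i <;> fin_cases j <;> simp_all [hf _]

@[simp]
lemma toAlternatingMap_apply (hf : f.IsAlt) (v : Fin 2 → M) :
    hf.toAlternatingMap v = f (v 0) (v 1) := rfl

end CommRing

theorem finrank_span_image_le {K M N : Type*} [Field K] [AddCommGroup M] [Module K M]
    [Module.Finite K M] [AddCommGroup N] [Module K N] {f : M →ₗ[K] M →ₗ[K] N} (hf : f.IsAlt) :
    finrank K (span K {f x y | (x : M) (y : M)}) ≤ (finrank K M).choose 2 := by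
  let F := exteriorPower.alternatingMapLinearEquiv hf.toAlternatingMap
  calc finrank K (span K {f x y | (x : M) (y : M)})
      ≤ finrank K (LinearMap.range F) := by
        refine Submodule.finrank_mono (span_le.2 ?_)
        rintro _ ⟨x, y, rfl⟩
        exact ⟨exteriorPower.ιMulti K 2 ![x, y], by simp [F]⟩
    _ ≤ finrank K (⋀[K]^2 M) := LinearMap.finrank_range_le F
    _ = (finrank K M).choose 2 := exteriorPower.finrank_eq K 2

end LinearMap.IsAlt

namespace LieAlgebra

variable {K L : Type*} [Field K] [LieRing L] [LieAlgebra K L]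

theorem orthogonal_derivedSeries_one_eq_center {B : LinearMap.BilinForm K L}
    (hB : B.SeparatingRight) (hinv : ∀ x y z : L, B ⁅x, y⁆ z = B x ⁅y, z⁆) :
    B.orthogonal (derivedSeries K L 1 : Submodule K L) = (center K L : Submodule K L) := by
  ext m
  calc m ∈ B.orthogonal (derivedSeries K L 1 : Submodule K L)
      ↔ span K {⁅x, y⁆ | (x : L) (y : L)} ≤ LinearMap.ker (B.flip m) := by
        rw [← coe_derivedSeries_one_eq]; rfl
    _ ↔ ∀ x y : L, B x ⁅y, m⁆ = 0 := by
        simp_rw [span_le, ← hinv]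
        exact ⟨fun h x y => h ⟨x, y, rfl⟩, by rintro h _ ⟨x, y, rfl⟩; exact h x y⟩
    _ ↔ m ∈ center K L := by
        refine ⟨fun h y => hB _ fun x => h x y, fun h x y => ?_⟩
        rw [(LieModule.mem_maxTrivSubmodule K L L m).1 h y, map_zero]
    _ ↔ m ∈ (center K L : Submodule K L) := Iff.rfl

variable [Module.Finite K L]

theorem finrank_quotient_center_eq_finrank_derivedSeries_one {B : LinearMap.BilinForm K L}
    (hB : B.Nondegenerate) (hinv : ∀ x y z : L, B ⁅x, y⁆ z = B x ⁅y, z⁆) :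
    finrank K (L ⧸ center K L) = finrank K (derivedSeries K L 1) := by
  have h := B.finrank_orthogonal hB (derivedSeries K L 1 : Submodule K L)
  rw [orthogonal_derivedSeries_one_eq_center hB.2 hinv] at h
  have := (center K L : Submodule K L).finrank_quotient_add_finrank
  have := (derivedSeries K L 1 : Submodule K L).finrank_le
  change finrank K (L ⧸ (center K L : Submodule K L)) =
    finrank K (derivedSeries K L 1 : Submodule K L)
  omega

theorem finrank_derivedSeries_one_le_choose :
    finrank K (derivedSeries K L 1) ≤ (finrank K (L ⧸ center K L)).choose 2 := by
  let Z := (center K L : Submodule K L)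
  let bracket : L →ₗ[K] L →ₗ[K] L := LieModule.toEnd K L L
  have hleft : Z ≤ LinearMap.ker bracket := fun z hz =>
    LinearMap.ext fun y => by
      change ⁅z, y⁆ = 0
      rw [← lie_skew, hz y, neg_zero]
  have hright : Z ≤ LinearMap.ker bracket.flip := fun z hz => LinearMap.ext fun x => hz x
  have halt : (bracket.liftQ₂ Z Z hleft hright).IsAlt :=
    (Submodule.Quotient.forall _).2 fun x => lie_self x
  have hspan : {bracket.liftQ₂ Z Z hleft hright x y | (x : L ⧸ Z) (y : L ⧸ Z)} =
      {⁅x, y⁆ | (x : L) (y : L)} := by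
    ext w
    simp only [Set.mem_ofPred_eq, (Submodule.mkQ_surjective Z).exists]
    rfl
  change finrank K (LieIdeal.toLieSubalgebra K L (derivedSeries K L 1)).toSubmodule ≤ _
  rw [coe_derivedSeries_one_eq, ← hspan]
  exact halt.finrank_span_image_le

theorem finrank_derivedSeries_one_lt [IsSolvable L] [Nontrivial L] :
    finrank K (derivedSeries K L 1) < finrank K L :=
  Submodule.finrank_lt (by simpa using (derivedSeries_lt_top_of_solvable K L).ne)

end LieAlgebra

theorem solvable_quadratic_dim_le_three_abelian_general
    (K : Type*) [Field K]
    (L : Type*) [LieRing L] [LieAlgebra K L] [Module.Finite K L]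
    (hdim : Module.finrank K L ≤ 3)
    [LieAlgebra.IsSolvable L]
    (B : LinearMap.BilinForm K L)
    (hB : B.Nondegenerate)
    (hinv : ∀ x y z : L, B ⁅x, y⁆ z = B x ⁅y, z⁆) :
    IsLieAbelian L := by
  rcases subsingleton_or_nontrivial L with _ | _
  · exact ⟨fun _ _ => Subsingleton.elim _ _⟩
  have hchoose := finrank_derivedSeries_one_le_choose (K := K) (L := L)
  have hlt := (finrank_derivedSeries_one_lt (K := K) (L := L)).trans_le hdim
  rw [← finrank_quotient_center_eq_finrank_derivedSeries_one hB hinv] at hchoose hlt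
  have hzero : finrank K (L ⧸ center K L) = 0 := by
    generalize finrank K (L ⧸ center K L) = q at hchoose hlt ⊢
    interval_cases q <;> simp_all [Nat.choose]
  have : Subsingleton (L ⧸ center K L) := Module.finrank_zero_iff.1 hzero
  have hZ : (center K L : Submodule K L) = ⊤ := Submodule.Quotient.subsingleton_iff.1 this
  exact (isLieAbelian_iff_center_eq_top K L).2 ((LieSubmodule.toSubmodule_eq_top _).1 hZ)

/-- A solvable Lie algebra of dimension at most `3` over a field of characteristic zero
admitting a nondegenerate symmetric invariant bilinear form is abelian. -/
theorem solvable_quadratic_dim_le_three_abelian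
    (K : Type*) [Field K] [CharZero K]
    (L : Type*) [LieRing L] [LieAlgebra K L] [Module.Finite K L]
    (hdim : Module.finrank K L ≤ 3)
    [LieAlgebra.IsSolvable L]
    (B : LinearMap.BilinForm K L)
    (hB : B.Nondegenerate)
    (hsymm : ∀ x y : L, B x y = B y x)
    (hinv : ∀ x y z : L, B ⁅x, y⁆ z = B x ⁅y, z⁆) :
    IsLieAbelian L :=
  solvable_quadratic_dim_le_three_abelian_general K L hdim B hB hinv
end
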